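/- Let h₁, h₂, p, f, g, q, r ∈ DH be such that each x among these seven elements satisfies x + x̄ ∈ ℝ and x·x̄ ∈ ℝ (so each t − x is a linear motion polynomial). Suppose the two 'Bennett flip' identities (t − h₁)·(t − p) = (t − f)·(t − g) and (t − h̄₂)·(t − p) = (t − q)·(t − r̄) hold in DH[t]. Then the product (t − h₁)·(t − h₂)·(t − q)·(t − r̄)·(t − ḡ)·(t − f̄) is a polynomial with only real scalar coefficients; in fact it equals (t − h₂)(t − h̄₂)·(t − g)(t − ḡ)·(t − f)(t − f̄). (This is the loop closure of the over-constrained 6R linkage obtained from Bennett flips.) -/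

import Mathlib

/-!
A linear motion polynomial `t - x` times its conjugate `t - x̄` is the real quadratic
`t² - (x + x̄) t + x x̄`, hence central in `DH[t]`. Substituting `(t - h̄₂)(t - p)` for
`(t - q)(t - r̄)`, the central factor `(t - h₂)(t - h̄₂)` moves to the front, after which
`(t - h₁)(t - p)` becomes `(t - f)(t - g)` and the central factor `(t - g)(t - ḡ)` moves past
`t - f`.
-/

open Polynomial
noncomputable section

/-- The dual quaternions: dual numbers over the real quaternions. -/
abbrev DH : Type := DualNumber (Quaternion ℝ)

/-- Dual quaternion conjugation: the conjugate of `p + εq` is `p̄ + εq̄`. -/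
def dconj (h : DH) : DH :=
  TrivSqZeroExt.inl (star (TrivSqZeroExt.fst h)) + TrivSqZeroExt.inr (star (TrivSqZeroExt.snd h))

/-- Coefficientwise conjugation of a dual quaternion polynomial. -/
def pconj (P : Polynomial DH) : Polynomial DH :=
  P.sum fun n a => Polynomial.monomial n (dconj a)

/-- The quaternion unit i. -/
def qi : Quaternion ℝ := ⟨0,1,0,0⟩
/-- The quaternion unit j. -/
def qj : Quaternion ℝ := ⟨0,0,1,0⟩
/-- The quaternion unit k. -/
def qk : Quaternion ℝ := ⟨0,0,0,1⟩

/-- A dual quaternion polynomial is real if all its coefficients are real scalars. -/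
def IsRealPoly (P : Polynomial DH) : Prop :=
  ∃ r : Polynomial ℝ, P = r.map (algebraMap ℝ DH)

/-- The primal part of a dual quaternion polynomial. -/
def primalPart (C : Polynomial DH) : Polynomial (Quaternion ℝ) :=
  C.sum fun n a => Polynomial.monomial n (TrivSqZeroExt.fst a)


/-- A dual quaternion `x` gives a linear motion polynomial `t - x` if
`x + x̄ ∈ ℝ` and `x·x̄ ∈ ℝ`. -/
def IsMotionQuat (x : DH) : Prop :=
  (∃ r : ℝ, x + dconj x = algebraMap ℝ DH r) ∧ (∃ r : ℝ, x * dconj x = algebraMap ℝ DH r)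

theorem loop_closure_of_flips {M : Type*} [Monoid M] {a b b' p f f' g g' q r' : M}
    (hb : Commute (b * b') a) (hg : Commute (g * g') f)
    (flip₁ : a * p = f * g) (flip₂ : b' * p = q * r') :
    a * b * q * r' * g' * f' = b * b' * (g * g') * (f * f') :=
  calc a * b * q * r' * g' * f' = a * (b * b') * p * g' * f' := by
        simp only [mul_assoc]; rw [← mul_assoc q, ← flip₂, mul_assoc]
    _ = b * b' * (f * (g * g')) * f' := by
        rw [← hb.eq]; simp only [mul_assoc]; rw [← mul_assoc a, flip₁]; simp only [mul_assoc]
    _ = b * b' * (g * g') * (f * f') := by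
        rw [← hg.eq]; simp only [mul_assoc]

namespace Polynomial

theorem commute_map_algebraMap {R A : Type*} [CommSemiring R] [Semiring A] [Algebra R A]
    (p : R[X]) (P : A[X]) :
    Commute (p.map (algebraMap R A)) P := by
  induction p using Polynomial.induction_on' with
  | add p q hp hq => simpa only [Polynomial.map_add] using hp.add_left hq
  | monomial n a =>
    rw [map_monomial, ← C_mul_X_pow_eq_monomial, ← algebraMap_apply]
    exact (Algebra.commute_algebraMap_left a P).mul_left ((commute_X P).pow_left n)

theorem X_sub_C_mul_X_sub_C_eq_map {R A : Type*} [CommRing R] [Ring A] [Algebra R A]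
    {x y : A} {s n : R} (hs : x + y = algebraMap R A s) (hn : x * y = algebraMap R A n) :
    (X - C x) * (X - C y) = (X ^ 2 - C s * X + C n).map (algebraMap R A) := by
  have hXy : (X : A[X]) * C y = C y * X := X_mul
  calc (X - C x) * (X - C y) = X ^ 2 - C (x + y) * X + C (x * y) := by
        rw [sub_mul, mul_sub, mul_sub, hXy, C_add, add_mul, C_mul, sq]
        abel
    _ = _ := by simp [hs, hn]

end Polynomial

theorem IsRealPoly.commute {P : DH[X]} (hP : IsRealPoly P) (Q : DH[X]) : Commute P Q := by
  obtain ⟨p, rfl⟩ := hP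
  exact commute_map_algebraMap p Q

theorem IsRealPoly.mul {P Q : DH[X]} (hP : IsRealPoly P) (hQ : IsRealPoly Q) :
    IsRealPoly (P * Q) := by
  obtain ⟨p, rfl⟩ := hP
  obtain ⟨q, rfl⟩ := hQ
  exact ⟨p * q, (Polynomial.map_mul _).symm⟩

theorem IsMotionQuat.isRealPoly {x : DH} (hx : IsMotionQuat x) :
    IsRealPoly ((X - C x) * (X - C (dconj x))) := by
  obtain ⟨⟨s, hs⟩, n, hn⟩ := hx
  exact ⟨_, X_sub_C_mul_X_sub_C_eq_map hs hn⟩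

theorem bennett_flip_loop_closure_general (h₁ h₂ p f g q r : DH)
    (hh₂ : IsMotionQuat h₂)
    (hf : IsMotionQuat f) (hg : IsMotionQuat g)
    (flip₁ : ((X : Polynomial DH) - Polynomial.C h₁) * (X - Polynomial.C p) =
      (X - Polynomial.C f) * (X - Polynomial.C g))
    (flip₂ : ((X : Polynomial DH) - Polynomial.C (dconj h₂)) * (X - Polynomial.C p) =
      (X - Polynomial.C q) * (X - Polynomial.C (dconj r))) :
    IsRealPoly
      (((X : Polynomial DH) - Polynomial.C h₁) * (X - Polynomial.C h₂) *
        (X - Polynomial.C q) * (X - Polynomial.C (dconj r)) *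
        (X - Polynomial.C (dconj g)) * (X - Polynomial.C (dconj f))) ∧
    ((X : Polynomial DH) - Polynomial.C h₁) * (X - Polynomial.C h₂) *
        (X - Polynomial.C q) * (X - Polynomial.C (dconj r)) *
        (X - Polynomial.C (dconj g)) * (X - Polynomial.C (dconj f)) =
      ((X - Polynomial.C h₂) * (X - Polynomial.C (dconj h₂))) *
        ((X - Polynomial.C g) * (X - Polynomial.C (dconj g))) *
        ((X - Polynomial.C f) * (X - Polynomial.C (dconj f))) := by
  have closure := loop_closure_of_flips (f' := X - C (dconj f))
    (hh₂.isRealPoly.commute _) (hg.isRealPoly.commute _) flip₁ flip₂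
  refine ⟨?_, closure⟩
  rw [closure]
  exact (hh₂.isRealPoly.mul hg.isRealPoly).mul hf.isRealPoly

/-- Loop closure of the 6R linkage obtained from two Bennett flips: if
`(t-h₁)(t-p) = (t-f)(t-g)` and `(t-h̄₂)(t-p) = (t-q)(t-r̄)`, then
`(t-h₁)(t-h₂)(t-q)(t-r̄)(t-ḡ)(t-f̄)` equals
`(t-h₂)(t-h̄₂)·(t-g)(t-ḡ)·(t-f)(t-f̄)` and has only real scalar coefficients. -/
theorem bennett_flip_loop_closure (h₁ h₂ p f g q r : DH)
    (hh₁ : IsMotionQuat h₁) (hh₂ : IsMotionQuat h₂) (hp : IsMotionQuat p)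
    (hf : IsMotionQuat f) (hg : IsMotionQuat g) (hq : IsMotionQuat q)
    (hr : IsMotionQuat r)
    (flip₁ : ((X : Polynomial DH) - Polynomial.C h₁) * (X - Polynomial.C p) =
      (X - Polynomial.C f) * (X - Polynomial.C g))
    (flip₂ : ((X : Polynomial DH) - Polynomial.C (dconj h₂)) * (X - Polynomial.C p) =
      (X - Polynomial.C q) * (X - Polynomial.C (dconj r))) :
    IsRealPoly
      (((X : Polynomial DH) - Polynomial.C h₁) * (X - Polynomial.C h₂) *
        (X - Polynomial.C q) * (X - Polynomial.C (dconj r)) *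
        (X - Polynomial.C (dconj g)) * (X - Polynomial.C (dconj f))) ∧
    ((X : Polynomial DH) - Polynomial.C h₁) * (X - Polynomial.C h₂) *
        (X - Polynomial.C q) * (X - Polynomial.C (dconj r)) *
        (X - Polynomial.C (dconj g)) * (X - Polynomial.C (dconj f)) =
      ((X - Polynomial.C h₂) * (X - Polynomial.C (dconj h₂))) *
        ((X - Polynomial.C g) * (X - Polynomial.C (dconj g))) *
        ((X - Polynomial.C f) * (X - Polynomial.C (dconj f))) :=
  bennett_flip_loop_closure_general h₁ h₂ p f g q r hh₂ hf hg flip₁ flip₂
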